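/- arXiv:math/0612135 — 3 statements merged into one kernel-verified Lean document; each statement's English description precedes it below -/
import Mathlib

section
/- Let n be a positive integer with n ≡ 2 or 3 (mod 4) and let k be an integer with 0 ≤ k ≤ n−1. Then P_{n,k} = Q_{n,n−k−1} and Q_{n,k} = P_{n,n−k−1}. -/
/-!
Reading a permutation backwards, `A ↦ A * Fin.revPerm`, is an involution that preserves parity
alternation, turns ascents into descents, so that `k` ascents become `n - 1 - k`, and turns the
inversions into the non-inversions, so that `inv A + inv (A * Fin.revPerm) = n.choose 2`. For
`n ≡ 2, 3 (mod 4)` the number `n.choose 2` is odd, so the reversal also exchanges even and odd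
permutations.
-/

open Finset

/-- Number of ascents of a permutation of `[n]` (positions `i` with `a_i < a_{i+1}`). -/
def ascents {n : ℕ} (A : Equiv.Perm (Fin n)) : ℕ :=
  (univ.filter fun i : Fin n => ∃ h : i.val + 1 < n, A i < A ⟨i.val + 1, h⟩).card

/-- Number of inversions of a permutation. -/
def invNum {n : ℕ} (A : Equiv.Perm (Fin n)) : ℕ :=
  (univ.filter fun p : Fin n × Fin n => p.1 < p.2 ∧ A p.2 < A p.1).card

/-- A permutation is parity-alternate if consecutive entries have different parity. -/
def IsPAP {n : ℕ} (A : Equiv.Perm (Fin n)) : Prop :=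
  ∀ i : Fin n, ∀ h : i.val + 1 < n, (A i).val % 2 ≠ (A ⟨i.val + 1, h⟩).val % 2

instance {n : ℕ} (A : Equiv.Perm (Fin n)) : Decidable (IsPAP A) := by
  unfold IsPAP; infer_instance

/-- `P_{n,k}`: number of even parity-alternate permutations of `[n]` with `k` ascents. -/
def papEven (n k : ℕ) : ℕ :=
  (univ.filter fun A : Equiv.Perm (Fin n) => IsPAP A ∧ ascents A = k ∧ Even (invNum A)).card

/-- `Q_{n,k}`: number of odd parity-alternate permutations of `[n]` with `k` ascents. -/
def papOdd (n k : ℕ) : ℕ :=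
  (univ.filter fun A : Equiv.Perm (Fin n) => IsPAP A ∧ ascents A = k ∧ Odd (invNum A)).card

/-- `S_{n,k}`: number of parity-alternate permutations of `[n]` with `k` ascents. -/
def papTotal (n k : ℕ) : ℕ :=
  (univ.filter fun A : Equiv.Perm (Fin n) => IsPAP A ∧ ascents A = k).card

/-- `R_{n,k} = P_{n,k} - Q_{n,k}`. -/
def papSigned (n k : ℕ) : ℤ := (papEven n k : ℤ) - papOdd n k

/-- `B_{n,k}`: number of even permutations of `[n]` with `k` ascents. -/
def eulerEven (n k : ℕ) : ℕ :=
  (univ.filter fun A : Equiv.Perm (Fin n) => ascents A = k ∧ Even (invNum A)).card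

/-- `C_{n,k}`: number of odd permutations of `[n]` with `k` ascents. -/
def eulerOdd (n k : ℕ) : ℕ :=
  (univ.filter fun A : Equiv.Perm (Fin n) => ascents A = k ∧ Odd (invNum A)).card

/-- `D_{n,k} = B_{n,k} - C_{n,k}`: the signed Eulerian number. -/
def eulerSigned (n k : ℕ) : ℤ := (eulerEven n k : ℤ) - eulerOdd n k

open Equiv

namespace Fin

variable {n : ℕ}

theorem rev_eq_mk_succ (i : Fin n) (h : i.val + 1 < n) :
    i.rev = ⟨n - 2 - i + 1, by omega⟩ := by
  ext; simp only [val_rev]; omega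

theorem rev_mk_succ_eq (i : Fin n) (h : i.val + 1 < n) :
    (⟨i + 1, h⟩ : Fin n).rev = ⟨n - 2 - i, by omega⟩ := by
  ext; simp only [val_rev]; omega

end Fin

variable {n : ℕ}

theorem mul_revPerm_mul_revPerm (A : Perm (Fin n)) : A * Fin.revPerm * Fin.revPerm = A := by
  ext; simp

def descents (A : Perm (Fin n)) : ℕ :=
  #{i : Fin n | ∃ h : i.val + 1 < n, A ⟨i.val + 1, h⟩ < A i}

theorem ascents_add_descents (A : Perm (Fin n)) : ascents A + descents A = n - 1 := by
  have hsplit (i : Fin n) : ((∃ h : i.val + 1 < n, A i < A ⟨i.val + 1, h⟩) ∨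
      ∃ h : i.val + 1 < n, A ⟨i.val + 1, h⟩ < A i) ↔ i.val + 1 < n := by
    refine ⟨by rintro (⟨h, -⟩ | ⟨h, -⟩) <;> exact h, fun h => ?_⟩
    have hne : A i ≠ A ⟨i.val + 1, h⟩ := by simp [Fin.ext_iff]
    exact hne.lt_or_gt.imp (⟨h, ·⟩) (⟨h, ·⟩)
  have hdisj : Disjoint
      (univ.filter fun i : Fin n => ∃ h : i.val + 1 < n, A i < A ⟨i.val + 1, h⟩)
      (univ.filter fun i : Fin n => ∃ h : i.val + 1 < n, A ⟨i.val + 1, h⟩ < A i) := by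
    rw [disjoint_filter]
    rintro i - ⟨h, hlt⟩ ⟨_, hgt⟩
    exact lt_asymm hlt hgt
  calc ascents A + descents A
      = #{i : Fin n | i.val < n - 1} := by
        rw [ascents, descents, ← card_union_of_disjoint hdisj, ← filter_or]
        congr 1; ext i; simp only [mem_filter, mem_univ, true_and, hsplit]; omega
    _ = n - 1 := by rw [Fin.card_filter_val_lt]; omega

theorem ascents_le (A : Perm (Fin n)) : ascents A ≤ n - 1 :=
  (Nat.le_add_right _ _).trans (ascents_add_descents A).le

theorem ascents_mul_revPerm_eq_descents (A : Perm (Fin n)) :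
    ascents (A * Fin.revPerm) = descents A := by
  refine card_nbij' (fun i => ⟨n - 2 - i, by omega⟩) (fun i => ⟨n - 2 - i, by omega⟩)
    ?_ ?_ ?_ ?_
  all_goals intro i hi; simp only [coe_filter, Set.mem_ofPred_eq, mem_univ, true_and] at hi ⊢
  · obtain ⟨h, hlt⟩ := hi
    refine ⟨by omega, ?_⟩
    rwa [Perm.mul_apply, Perm.mul_apply, Fin.revPerm_apply, Fin.revPerm_apply,
      Fin.rev_eq_mk_succ i h, Fin.rev_mk_succ_eq i h] at hlt
  · obtain ⟨h, hgt⟩ := hi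
    have hj : n - 2 - i + 1 < n := by omega
    refine ⟨hj, ?_⟩
    rwa [Perm.mul_apply, Perm.mul_apply, Fin.revPerm_apply, Fin.revPerm_apply,
      ← Fin.rev_eq_mk_succ i h, ← Fin.rev_mk_succ_eq i h, Fin.rev_rev, Fin.rev_rev]
  all_goals obtain ⟨h, -⟩ := hi; ext; simp only; omega

theorem ascents_mul_revPerm (A : Perm (Fin n)) :
    ascents (A * Fin.revPerm) = n - 1 - ascents A := by
  have := ascents_add_descents A
  rw [ascents_mul_revPerm_eq_descents]
  omega

theorem isPAP_mul_revPerm {A : Perm (Fin n)} (hA : IsPAP A) : IsPAP (A * Fin.revPerm) := by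
  intro i h
  rw [Perm.mul_apply, Perm.mul_apply, Fin.revPerm_apply, Fin.revPerm_apply,
    Fin.rev_eq_mk_succ i h, Fin.rev_mk_succ_eq i h]
  exact (hA ⟨n - 2 - i, by omega⟩ (by simp only; omega)).symm

theorem isPAP_mul_revPerm_iff {A : Perm (Fin n)} : IsPAP (A * Fin.revPerm) ↔ IsPAP A :=
  ⟨fun hA => mul_revPerm_mul_revPerm A ▸ isPAP_mul_revPerm hA, isPAP_mul_revPerm⟩

theorem invNum_mul_revPerm (A : Perm (Fin n)) :
    invNum (A * Fin.revPerm) = #{p : Fin n × Fin n | p.1 < p.2 ∧ A p.1 < A p.2} :=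
  card_equiv ((Equiv.prodComm _ _).trans (Fin.revPerm.prodCongr Fin.revPerm)) fun p => by
    simp [Fin.rev_lt_rev]

theorem invNum_mul_revPerm_add (A : Perm (Fin n)) :
    invNum (A * Fin.revPerm) + invNum A = n.choose 2 := by
  have hdisj : Disjoint
      (univ.filter fun p : Fin n × Fin n => p.1 < p.2 ∧ A p.1 < A p.2)
      (univ.filter fun p : Fin n × Fin n => p.1 < p.2 ∧ A p.2 < A p.1) := by
    rw [disjoint_filter]
    rintro p - ⟨-, hlt⟩ ⟨-, hgt⟩
    exact lt_asymm hlt hgt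
  calc invNum (A * Fin.revPerm) + invNum A
      = #{p : Fin n × Fin n | p.1 < p.2} := by
        rw [invNum_mul_revPerm, invNum, ← card_union_of_disjoint hdisj, ← filter_or]
        congr 1; ext p
        simp only [mem_filter, mem_univ, true_and, ← and_or_left, and_iff_left_iff_imp]
        exact fun h => lt_or_gt_of_ne (A.injective.ne h.ne)
    _ = n.choose 2 := by rw [Fintype.card_product_filter_lt, Fintype.card_fin]

theorem odd_choose_two_of_mod_four (h4 : n % 4 = 2 ∨ n % 4 = 3) : Odd (n.choose 2) := by
  have h : 2 * n.choose 2 = n * (n - 1) := by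
    rw [Nat.choose_two_right, Nat.mul_div_cancel' (Nat.even_mul_pred_self n).two_dvd]
  have hmod := Nat.mul_mod n (n - 1) 4
  rw [Nat.odd_iff]
  rcases h4 with h4 | h4 <;> rw [h4] at hmod <;> omega

theorem papEven_papOdd_swap_of_mod_four_general (n k : ℕ)
    (h4 : n % 4 = 2 ∨ n % 4 = 3) (hk : k ≤ n - 1) :
    papEven n k = papOdd n (n - k - 1) ∧ papOdd n k = papEven n (n - k - 1) := by
  have hasc (A : Perm (Fin n)) : ascents (A * Fin.revPerm) = n - k - 1 ↔ ascents A = k := by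
    have := ascents_le A
    rw [ascents_mul_revPerm]
    omega
  have hsum (A : Perm (Fin n)) : Odd (invNum (A * Fin.revPerm) + invNum A) :=
    invNum_mul_revPerm_add A ▸ odd_choose_two_of_mod_four h4
  constructor <;> refine card_equiv (Equiv.mulRight Fin.revPerm) fun A => ?_ <;>
    simp only [mem_filter, mem_univ, true_and, coe_mulRight, isPAP_mul_revPerm_iff, hasc]
  · rw [Nat.odd_add.mp (hsum A)]
  · rw [Nat.odd_add'.mp (hsum A)]

theorem papEven_papOdd_swap_of_mod_four (n k : ℕ) (hn0 : 0 < n)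
    (h4 : n % 4 = 2 ∨ n % 4 = 3) (hk : k ≤ n - 1) :
    papEven n k = papOdd n (n - k - 1) ∧ papOdd n k = papEven n (n - k - 1) :=
  papEven_papOdd_swap_of_mod_four_general n k h4 hk
end

section
/- Let n ≥ 2 be an integer. Then the number of even parity-alternate permutations of [n] equals the number of odd parity-alternate permutations of [n]. -/
/-
Transposing two values of the same parity maps parity-alternate permutations to parity-alternate
permutations and flips the sign, so it pairs even PAPs with odd ones. For `n ≥ 3` the values `1`
and `3` do this; for `n = 2` both permutations `12` and `21` are parity-alternate.
-/

open Finset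

open Equiv Perm

theorem sign_eq_neg_one_pow_invNum {n : ℕ} (σ : Perm (Fin n)) : sign σ = (-1) ^ invNum σ := by
  rw [sign_eq_prod_prod_Ioi, invNum, card_filter, ← prod_pow_eq_pow_sum, Fintype.prod_prod_type]
  refine prod_congr rfl fun i _ => ?_
  rw [← filter_lt_eq_Ioi, prod_filter]
  refine prod_congr rfl fun j _ => ?_
  rcases lt_trichotomy (σ i) (σ j) with h | h | h
  · simp [h, h.not_gt]
  · simp [σ.injective h]
  · simp [h, h.not_gt]

theorem even_invNum_iff_sign_eq_one {n : ℕ} (σ : Perm (Fin n)) :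
    Even (invNum σ) ↔ sign σ = 1 := by
  rw [sign_eq_neg_one_pow_invNum, neg_one_pow_eq_one_iff_even (by decide)]

theorem odd_invNum_iff_sign_eq_neg_one {n : ℕ} (σ : Perm (Fin n)) :
    Odd (invNum σ) ↔ sign σ = -1 := by
  rw [sign_eq_neg_one_pow_invNum, neg_one_pow_eq_neg_one_iff_odd (by decide)]

theorem card_filter_sign_eq_one_eq_card_filter_sign_eq_neg_one {α : Type*} [Fintype α]
    [DecidableEq α] (P : Perm α → Prop) [DecidablePred P] {x y : α} (hxy : x ≠ y)
    (hP : ∀ σ, P (swap x y * σ) ↔ P σ) :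
    #{σ | P σ ∧ sign σ = 1} = #{σ | P σ ∧ sign σ = -1} := by
  refine card_equiv (Equiv.mulLeft (swap x y)) fun σ => ?_
  simp only [mem_filter, mem_univ, true_and, coe_mulLeft, hP, Perm.sign_mul, sign_swap hxy,
    neg_one_mul, neg_inj]

theorem apply_swap_apply_of_apply_eq {α β : Type*} [DecidableEq α] (f : α → β) {v w : α}
    (hvw : f v = f w) (x : α) : f (swap v w x) = f x := by
  rw [swap_apply_def]
  split_ifs with hv hw
  · rw [hv, hvw]
  · rw [hw, hvw]
  · rfl

theorem isPAP_swap_mul_iff {n : ℕ} {v w : Fin n} (hvw : v.val % 2 = w.val % 2)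
    (A : Perm (Fin n)) : IsPAP (swap v w * A) ↔ IsPAP A := by
  simp only [IsPAP, mul_apply, apply_swap_apply_of_apply_eq (fun x : Fin n => x.val % 2) hvw]

theorem card_even_pap_eq_card_odd_pap (n : ℕ) (hn : 2 ≤ n) :
    (univ.filter fun A : Equiv.Perm (Fin n) => IsPAP A ∧ Even (invNum A)).card
      = (univ.filter fun A : Equiv.Perm (Fin n) => IsPAP A ∧ Odd (invNum A)).card := by
  rcases hn.eq_or_lt with rfl | h3
  · decide
  · simp only [even_invNum_iff_sign_eq_one, odd_invNum_iff_sign_eq_neg_one]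
    have hvw : (⟨0, by omega⟩ : Fin n) ≠ ⟨2, h3⟩ := by simp
    exact card_filter_sign_eq_one_eq_card_filter_sign_eq_neg_one IsPAP hvw
      (isPAP_swap_mul_iff (by simp))
end

section
/- Let n be an even positive integer and let k be an integer with 1 ≤ k ≤ n−1. Then the number of parity-alternate permutations A = a_1 a_2 ⋯ a_n of [n] with exactly k ascents satisfying a_1 < a_n equals (n−k)·S_{n−1,k−1}. -/
open Finset

/-!
For even `n` the first and last entries of a PAP also have different parities, so every cyclic
rotation of a PAP is again a PAP, and rotations preserve the number of cyclic ascents. Rotating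
`A` so that its minimal entry comes first gives a PAP `R` with `R 0 = 0`, whose ascents are
exactly its cyclic ascents; conversely, the rotations `A` of such an `R` with `A 0 < A (n - 1)`
are the cuts of `R` at one of its `n - k` cyclic descents. Deleting the leading minimum of `R`
leaves a PAP of `[n - 1]` with `k - 1` ascents, and every such PAP arises, because a PAP of odd
length starts with an entry of the majority parity.
-/

open Equiv Fin.CommRing

section

variable {m : ℕ}

theorem Fin.last_eq_neg_one : Fin.last m = -1 :=
  eq_neg_of_add_eq_zero_left (Fin.last_add_one m)

theorem ascents_eq_card_castSucc_lt_succ (A : Perm (Fin (m + 1))) :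
    ascents A = #{i : Fin m | A i.castSucc < A i.succ} := by
  symm
  refine card_bij (fun i _ => i.castSucc) (fun i hi => ?_)
    (fun _ _ _ _ h => Fin.castSucc_injective _ h) (fun j hj => ?_)
  · simp only [mem_filter, mem_univ, true_and] at hi ⊢
    exact ⟨by simp, hi⟩
  · simp only [mem_filter, mem_univ, true_and] at hj
    obtain ⟨h, hlt⟩ := hj
    exact ⟨⟨j, by omega⟩, by simpa using hlt, rfl⟩

theorem isPAP_iff_castSucc_succ (A : Perm (Fin (m + 1))) :
    IsPAP A ↔ ∀ i : Fin m, (A i.castSucc).val % 2 ≠ (A i.succ).val % 2 :=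
  ⟨fun h i => h i.castSucc (by simp), fun h i hi => h ⟨i, by omega⟩⟩

theorem IsPAP.apply_mod_two {A : Perm (Fin (m + 1))} (hA : IsPAP A) (i : Fin (m + 1)) :
    (A i).val % 2 = ((A 0).val + i.val) % 2 := by
  induction i using Fin.induction with
  | zero => simp
  | succ i ih =>
    have := (isPAP_iff_castSucc_succ A).1 hA i
    rw [Fin.val_castSucc] at ih
    rw [Fin.val_succ]
    omega

theorem IsPAP.even_apply_zero {A : Perm (Fin (m + 1))} (hA : IsPAP A) (hm : Even m) :
    Even (A 0).val := by
  have hcast (i : Fin (m + 1)) : ((A i).val : ZMod 2) = (A 0).val + i.val := by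
    exact_mod_cast (ZMod.natCast_eq_natCast_iff' _ _ 2).2 (hA.apply_mod_two i)
  have hsum := Equiv.sum_comp A (fun x : Fin (m + 1) => (x.val : ZMod 2))
  rw [sum_congr rfl fun i _ => hcast i, sum_add_distrib, sum_const, card_univ, Fintype.card_fin,
    add_eq_right, nsmul_eq_mul, hm.add_one.natCast_zmod_two, one_mul] at hsum
  exact ZMod.natCast_eq_zero_iff_even.1 hsum

theorem IsPAP.apply_mod_two_ne_apply_add_one {A : Perm (Fin (m + 1))} (hA : IsPAP A) (hm : Odd m)
    (j : Fin (m + 1)) : (A j).val % 2 ≠ (A (j + 1)).val % 2 := by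
  have h₁ := hA.apply_mod_two j
  have h₂ := hA.apply_mod_two (j + 1)
  rw [Fin.val_add_one] at h₂
  obtain ⟨t, rfl⟩ := hm
  split_ifs at h₂ with hj
  · subst hj; simp only [Fin.val_last] at h₁; omega
  · omega

theorem IsPAP.mul_addRight {A : Perm (Fin (m + 1))} (hA : IsPAP A) (hm : Odd m)
    (c : Fin (m + 1)) : IsPAP (A * Equiv.addRight c) := by
  refine (isPAP_iff_castSucc_succ _).2 fun i => ?_
  simpa [← Fin.coeSucc_eq_succ, add_right_comm] using
    hA.apply_mod_two_ne_apply_add_one hm (i.castSucc + c)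

def cyclicAscents (A : Perm (Fin (m + 1))) : ℕ := #{j | A (j - 1) < A j}

theorem cyclicAscents_mul_addRight (A : Perm (Fin (m + 1))) (c : Fin (m + 1)) :
    cyclicAscents (A * Equiv.addRight c) = cyclicAscents A := by
  refine card_nbij' (· + c) (· - c) (fun j hj => ?_) (fun j hj => ?_) (fun j _ => by simp)
    (fun j _ => by simp)
  · simpa [sub_add_eq_add_sub] using hj
  · simpa [sub_add_eq_add_sub] using hj

theorem cyclicAscents_eq_ascents {A : Perm (Fin (m + 1))} (h : ¬A (Fin.last m) < A 0) :
    cyclicAscents A = ascents A := by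
  rw [cyclicAscents, Fin.card_filter_univ_succ', zero_sub, ← Fin.last_eq_neg_one, if_neg h, zero_add,
    ascents_eq_card_castSucc_lt_succ]
  simp only [← Fin.coeSucc_eq_succ, add_sub_cancel_right]

theorem card_cyclicDescents (A : Perm (Fin (m + 1))) (hm : m ≠ 0) :
    #{j | A j < A (j - 1)} = m + 1 - cyclicAscents A := by
  have hdesc :
      univ.filter (fun j => A j < A (j - 1)) = univ.filter (fun j => ¬A (j - 1) < A j) := by
    refine filter_congr fun j _ => ⟨not_lt_of_gt, fun h => lt_of_le_of_ne (not_lt.1 h) ?_⟩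
    rw [A.injective.ne_iff, Ne, eq_sub_iff_add_eq, add_eq_left, Fin.one_eq_zero_iff]
    omega
  have hsplit :=
    card_filter_add_card_filter_not (s := univ) fun j : Fin (m + 1) => A (j - 1) < A j
  rw [card_univ, Fintype.card_fin] at hsplit
  rw [hdesc, cyclicAscents]
  omega

theorem ascents_mul_addRight {A : Perm (Fin (m + 1))} {c : Fin (m + 1)}
    (hA : ¬A (Fin.last m) < A 0)
    (hAc : ¬(A * Equiv.addRight c) (Fin.last m) < (A * Equiv.addRight c) 0) :
    ascents (A * Equiv.addRight c) = ascents A := by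
  rw [← cyclicAscents_eq_ascents hA, ← cyclicAscents_eq_ascents hAc, cyclicAscents_mul_addRight]

theorem card_isPAP_first_lt_last (hm : Odd m) (k : ℕ) :
    #{A : Perm (Fin (m + 1)) | IsPAP A ∧ ascents A = k ∧ A 0 < A (Fin.last m)} =
      (m + 1 - k) * #{R : Perm (Fin (m + 1)) | IsPAP R ∧ ascents R = k ∧ R 0 = 0} := by
  set anchored := univ.filter fun R : Perm (Fin (m + 1)) => IsPAP R ∧ ascents R = k ∧ R 0 = 0
  have not_last_lt_zero (R : Perm (Fin (m + 1))) (hR : R 0 = 0) : ¬R (Fin.last m) < R 0 := by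
    simp [hR]
  have hdesc (R) (hR : R ∈ anchored) : #{c | R c < R (c - 1)} = m + 1 - k := by
    simp only [anchored, mem_filter, mem_univ, true_and] at hR
    rw [card_cyclicDescents R hm.pos.ne', cyclicAscents_eq_ascents (not_last_lt_zero R hR.2.2), hR.2.1]
  -- `A = R * addRight c` with `R 0 = 0` and the cut `c = -A⁻¹ 0` at a cyclic descent of `R`.
  calc _ = #(anchored.sigma fun R => {c | R c < R (c - 1)}) := by
        refine card_nbij' (fun A => ⟨A * Equiv.addRight (A⁻¹ 0), -A⁻¹ 0⟩)
          (fun p => p.1 * Equiv.addRight p.2) (fun A hA => ?_) (fun ⟨R, c⟩ hp => ?_)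
          (fun A _ => ?_) (fun ⟨R, c⟩ hp => ?_)
        · simp only [anchored, mem_coe, mem_sigma, mem_filter, mem_univ, true_and] at hA ⊢
          obtain ⟨hP, hasc, hlt⟩ := hA
          have hR0 : (A * Equiv.addRight (A⁻¹ 0)) 0 = 0 := by simp
          refine ⟨⟨hP.mul_addRight hm _, ?_, hR0⟩, ?_⟩
          · rw [ascents_mul_addRight (not_lt.2 hlt.le) (not_last_lt_zero _ hR0), hasc]
          · simpa [Fin.last_eq_neg_one, sub_eq_add_neg] using hlt
        · simp only [anchored, mem_coe, mem_sigma, mem_filter, mem_univ, true_and] at hp ⊢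
          obtain ⟨⟨hP, hasc, hR0⟩, hc⟩ := hp
          have hlt : (R * Equiv.addRight c) 0 < (R * Equiv.addRight c) (Fin.last m) := by
            simpa [Fin.last_eq_neg_one, sub_eq_add_neg, add_comm] using hc
          refine ⟨hP.mul_addRight hm _, ?_, hlt⟩
          rw [ascents_mul_addRight (not_last_lt_zero R hR0) (not_lt.2 hlt.le), hasc]
        · ext x; simp
        · simp only [anchored, mem_coe, mem_sigma, mem_filter, mem_univ, true_and] at hp
          have hinv : (R * Equiv.addRight c)⁻¹ 0 = -c := by
            rw [Perm.inv_eq_iff_eq]; simp [hp.1.2.2]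
          dsimp only
          rw [hinv, neg_neg]
          exact Sigma.ext (by ext x; simp) HEq.rfl
    _ = _ := by rw [card_sigma, sum_const_nat hdesc, mul_comm]

theorem Equiv.Perm.decomposeFin_symm_zero_snd {R : Perm (Fin (m + 1))} (hR : R 0 = 0) :
    decomposeFin.symm (0, (decomposeFin R).2) = R := by
  have hfst := decomposeFin_symm_apply_zero (decomposeFin R).1 (decomposeFin R).2
  rw [Prod.mk.eta, symm_apply_apply, hR] at hfst
  rw [hfst, Prod.mk.eta, symm_apply_apply]

theorem ascents_decomposeFin_symm_zero (B : Perm (Fin (m + 1))) :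
    ascents (Perm.decomposeFin.symm (0, B)) = ascents B + 1 := by
  rw [ascents_eq_card_castSucc_lt_succ, ascents_eq_card_castSucc_lt_succ,
    Fin.card_filter_univ_succ']
  simp [add_comm]

theorem isPAP_decomposeFin_symm_zero_iff (B : Perm (Fin (m + 1))) :
    IsPAP (Perm.decomposeFin.symm (0, B)) ↔ IsPAP B ∧ Even (B 0).val := by
  rw [isPAP_iff_castSucc_succ, isPAP_iff_castSucc_succ, Fin.forall_fin_succ, and_comm]
  simp only [Fin.castSucc_succ, Fin.castSucc_zero, Perm.decomposeFin_symm_apply_succ,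
    Perm.decomposeFin_symm_apply_zero, swap_self, refl_apply, Fin.val_succ, Fin.val_zero, ne_eq,
    Nat.even_iff]
  exact and_congr (forall_congr' fun i => by omega) (by omega)

theorem card_isPAP_apply_zero_eq_zero (hm : Odd m) (k : ℕ) :
    #{R : Perm (Fin (m + 1)) | IsPAP R ∧ ascents R = k + 1 ∧ R 0 = 0} = papTotal m k := by
  obtain ⟨M, rfl⟩ : ∃ M, m = M + 1 := ⟨m - 1, by have := hm.pos; omega⟩
  have hM : Even M := Nat.not_odd_iff_even.1 (Nat.odd_add_one.1 hm)
  symm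
  refine card_nbij' (fun B => Perm.decomposeFin.symm (0, B)) (fun R => (Perm.decomposeFin R).2)
    (fun B hB => ?_) (fun R hR => ?_) (fun B _ => by simp) (fun R hR => ?_)
  · simp only [mem_coe, mem_filter, mem_univ, true_and] at hB ⊢
    obtain ⟨hP, hasc⟩ := hB
    refine ⟨(isPAP_decomposeFin_symm_zero_iff B).2 ⟨hP, hP.even_apply_zero hM⟩, ?_, by simp⟩
    rw [ascents_decomposeFin_symm_zero, hasc]
  · simp only [mem_coe, mem_filter, mem_univ, true_and] at hR ⊢
    obtain ⟨hP, hasc, hR0⟩ := hR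
    rw [← Perm.decomposeFin_symm_zero_snd hR0, isPAP_decomposeFin_symm_zero_iff] at hP
    rw [← Perm.decomposeFin_symm_zero_snd hR0, ascents_decomposeFin_symm_zero] at hasc
    exact ⟨hP.1, by omega⟩
  · simp only [mem_coe, mem_filter, mem_univ, true_and] at hR
    exact Perm.decomposeFin_symm_zero_snd hR.2.2

end

theorem card_pap_first_lt_last (n k : ℕ) (hn : Even n) (hn0 : 0 < n)
    (hk1 : 1 ≤ k) :
    (univ.filter fun A : Equiv.Perm (Fin n) =>
        IsPAP A ∧ ascents A = k ∧ A ⟨0, hn0⟩ < A ⟨n - 1, by omega⟩).card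
      = (n - k) * papTotal (n - 1) (k - 1) := by
  obtain ⟨m, rfl⟩ : ∃ m, n = m + 1 := ⟨n - 1, by omega⟩
  obtain ⟨k, rfl⟩ : ∃ j, k = j + 1 := ⟨k - 1, by omega⟩
  have hm : Odd m := Nat.not_even_iff_odd.1 (Nat.even_add_one.1 hn)
  exact (card_isPAP_first_lt_last hm (k + 1)).trans
    (by rw [card_isPAP_apply_zero_eq_zero hm, Nat.add_sub_cancel, Nat.add_sub_cancel])
end
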